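/- arXiv:1607.02943 — 2 statements merged into one kernel-verified Lean document; each statement's English description precedes it below -/
import Mathlib

section
/- Let H be a Tonelli Hamiltonian on ℝⁿ × ℝⁿ with associated Tonelli Lagrangian L, ℤⁿ-periodic in x. For λ > 0 define ū_λ(x) = inf { ∫_{−∞}^0 e^{λs} L(σ(s), σ̇(s)) ds : σ : (−∞,0] → ℝⁿ piecewise C¹ with σ(0) = x }. Then: (1) ū_λ(x) is finite for every x ∈ ℝⁿ and ū_λ is ℤⁿ-periodic; (2) there exists a constant K > 0 depending only on L (not on λ) such that for every λ > 0, |ū_λ(x) − ū_λ(y)| ≤ K|x − y| for all x, y ∈ ℝⁿ; (3) ū_λ is λ-dominated by L. -/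
open Set Filter MeasureTheory Real

noncomputable section

abbrev E (n : ℕ) : Type := EuclideanSpace ℝ (Fin n)

noncomputable def Hp {n : ℕ} (H : E n × E n → ℝ) (x p : E n) : E n :=
  gradient (fun q => H (x, q)) p

noncomputable def Hx {n : ℕ} (H : E n × E n → ℝ) (x p : E n) : E n :=
  gradient (fun y => H (y, p)) x

noncomputable def Lv {n : ℕ} (L : E n × E n → ℝ) (x v : E n) : E n :=
  gradient (fun w => L (x, w)) v

noncomputable def Lx {n : ℕ} (L : E n × E n → ℝ) (x v : E n) : E n :=
  gradient (fun y => L (y, v)) x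

/-- A Tonelli Hamiltonian. -/
def Tonelli {n : ℕ} (H : E n × E n → ℝ) : Prop :=
  ContDiff ℝ 2 H ∧
  (∀ x p v : E n, v ≠ 0 → 0 < (inner ℝ (fderiv ℝ (fun q => Hp H x q) p v) v : ℝ)) ∧
  (∀ A : ℝ, ∃ B : ℝ, 0 ≤ B ∧ ∀ x p : E n, A * ‖p‖ - B ≤ H (x, p))

/-- `L` is the Lagrangian associated to `H` by fiberwise Legendre-Fenchel transform. -/
def IsLagrangianOf {n : ℕ} (L H : E n × E n → ℝ) : Prop :=
  ∀ x v : E n, IsLUB {r : ℝ | ∃ p : E n, r = (inner ℝ p v : ℝ) - H (x, p)} (L (x, v))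

/-- A continuous piecewise `C¹` curve on `[a,b]`, with derivative `γ'`. -/
def PiecewiseC1 {n : ℕ} (a b : ℝ) (γ γ' : ℝ → E n) : Prop :=
  ContinuousOn γ (Set.Icc a b) ∧
  ∃ s : Finset ℝ,
    (∀ t ∈ Set.Icc a b, t ∉ s → HasDerivAt γ (γ' t) t) ∧
    ContinuousOn γ' (Set.Icc a b \ s) ∧
    ∃ C : ℝ, ∀ t ∈ Set.Icc a b, ‖γ' t‖ ≤ C

/-- `u` is λ-dominated by `L`. -/
def Dominated {n : ℕ} (lam : ℝ) (L : E n × E n → ℝ) (u : E n → ℝ) : Prop :=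
  ∀ a b : ℝ, a < b → ∀ γ γ' : ℝ → E n, PiecewiseC1 a b γ γ' →
    Real.exp (lam * b) * u (γ b) - Real.exp (lam * a) * u (γ a) ≤
      ∫ t in a..b, Real.exp (lam * t) * L (γ t, γ' t)

/-- `γ` is `(u,L)`-λ-calibrated on `[a,b]`. -/
def Calibrated {n : ℕ} (lam : ℝ) (L : E n × E n → ℝ) (u : E n → ℝ)
    (a b : ℝ) (γ γ' : ℝ → E n) : Prop :=
  Real.exp (lam * b) * u (γ b) - Real.exp (lam * a) * u (γ a) =
    ∫ t in a..b, Real.exp (lam * t) * L (γ t, γ' t)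

def intVec {n : ℕ} (k : Fin n → ℤ) : E n :=
  (EuclideanSpace.equiv (Fin n) ℝ).symm (fun i => (k i : ℝ))


/-- The set of (finite) discounted actions of piecewise `C¹` curves
`σ : (-∞,0] → ℝⁿ` ending at `x`. -/
def valSet {n : ℕ} (lam : ℝ) (L : E n × E n → ℝ) (x : E n) : Set ℝ :=
  { r | ∃ σ σ' : ℝ → E n, (∀ a < (0:ℝ), PiecewiseC1 a 0 σ σ') ∧ σ 0 = x ∧
      IntegrableOn (fun s => Real.exp (lam * s) * L (σ s, σ' s)) (Set.Iic 0) volume ∧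
      r = ∫ s in Set.Iic (0:ℝ), Real.exp (lam * s) * L (σ s, σ' s) }

/-- The value function `ū_λ(x)`, infimum of the discounted action over curves
ending at `x`. -/
noncomputable def ubar {n : ℕ} (lam : ℝ) (L : E n × E n → ℝ) (x : E n) : ℝ :=
  sInf (valSet lam L x)

/-! The discounted action of a curve is at least `c/λ` when `c ≤ 0` is a lower bound of `L`
(one exists because `H(·,0)` is periodic, hence bounded above), so `ū_λ` is finite; it is
periodic because translating a curve by an integer vector does not change its action.
Prepending a curve ending at `γ a` to `γ : [a,0] → ℝⁿ` gives
`ū_λ(γ 0) ≤ e^{λa} ū_λ(γ a) + ∫_a^0 e^{λt} L(γ, γ̇)`, which after a time shift is the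
domination. Along the unit speed segment from `y` to `x`, of length `T`, domination gives
`ū_λ(x) - e^{-λT} ū_λ(y) ≤ B T`, where `B` bounds `L` on unit velocities, and
`(1 - e^{-λT}) ū_λ(y) ≥ (1 - e^{-λT}) c/λ ≥ c T`: the factor `1/λ` of the lower bound is
absorbed by `1 - e^{-λT} ≤ λT`, so the Lipschitz constant `B - c` does not depend on `λ`. -/

section Periodic

variable {n : ℕ}

theorem exists_forall_le_of_intVec_periodic {f : E n → ℝ} (hf : Continuous f)
    (hper : ∀ (k : Fin n → ℤ) (x : E n), f (x + intVec k) = f x) :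
    ∃ M, ∀ x, f x ≤ M := by
  set e := (EuclideanSpace.equiv (Fin n) ℝ).symm
  have hK : IsCompact (e '' univ.pi fun _ => Icc (0 : ℝ) 1) :=
    (isCompact_univ_pi fun _ => isCompact_Icc).image e.continuous
  obtain ⟨M, hM⟩ := (hK.image hf).bddAbove
  refine ⟨M, fun x => ?_⟩
  have hfract : x - intVec (fun i => ⌊x i⌋) = e fun i => Int.fract (x i) := by
    ext i
    exact Int.self_sub_floor (x i)
  rw [← sub_add_cancel x (intVec fun i => ⌊x i⌋), hper, hfract]
  exact hM ⟨_, ⟨_, fun i _ => ⟨Int.fract_nonneg _, (Int.fract_lt_one _).le⟩, rfl⟩, rfl⟩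

end Periodic

namespace IsLagrangianOf

variable {n : ℕ} {H L : E n × E n → ℝ}

theorem neg_le (hLH : IsLagrangianOf L H) (x v : E n) : -H (x, 0) ≤ L (x, v) :=
  (hLH x v).1 ⟨0, by simp⟩

theorem measurable (hLH : IsLagrangianOf L H) (hH : Continuous H) : Measurable L := by
  refine LowerSemicontinuous.measurable (lowerSemicontinuous_iff_isOpen_preimage.2 fun a => ?_)
  have hsup : L ⁻¹' Ioi a = ⋃ p : E n, {q | a < inner ℝ p q.2 - H (q.1, p)} := by
    ext ⟨x, v⟩
    simp only [mem_preimage, mem_Ioi, mem_iUnion, lt_isLUB_iff (hLH x v)]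
    exact ⟨fun ⟨_, ⟨p, hp⟩, h⟩ => ⟨p, by rwa [hp] at h⟩,
      fun ⟨p, h⟩ => ⟨_, ⟨p, rfl⟩, h⟩⟩
  rw [hsup]
  exact isOpen_iUnion fun p => isOpen_lt continuous_const
    ((continuous_const.inner continuous_snd).sub (hH.comp (continuous_fst.prodMk continuous_const)))

theorem exists_le_of_norm_le (hLH : IsLagrangianOf L H)
    (hsuper : ∀ A : ℝ, ∃ B : ℝ, 0 ≤ B ∧ ∀ x p : E n, A * ‖p‖ - B ≤ H (x, p))
    (A : ℝ) :
    ∃ B : ℝ, 0 ≤ B ∧ ∀ x v : E n, ‖v‖ ≤ A → L (x, v) ≤ B := by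
  obtain ⟨B, hB0, hB⟩ := hsuper (A + 1)
  refine ⟨B, hB0, fun x v hv => (hLH x v).2 ?_⟩
  rintro _ ⟨p, rfl⟩
  have hpv : inner ℝ p v ≤ ‖p‖ * A :=
    (real_inner_le_norm p v).trans (mul_le_mul_of_nonneg_left hv (norm_nonneg p))
  nlinarith [hB x p, norm_nonneg p]

theorem exists_forall_le (hLH : IsLagrangianOf L H) (hH : Continuous H)
    (hper : ∀ (k : Fin n → ℤ) (x pp : E n), H (x + intVec k, pp) = H (x, pp)) :
    ∃ c ≤ 0, ∀ x v : E n, c ≤ L (x, v) := by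
  obtain ⟨M, hM⟩ := exists_forall_le_of_intVec_periodic (f := fun x => H (x, 0))
    (hH.comp (continuous_id.prodMk continuous_const)) fun k x => hper k x 0
  exact ⟨min (-M) 0, min_le_right _ _, fun x v =>
    (min_le_left _ _).trans (by linarith [hLH.neg_le x v, hM x])⟩

theorem periodic (hLH : IsLagrangianOf L H)
    (hper : ∀ (k : Fin n → ℤ) (x pp : E n), H (x + intVec k, pp) = H (x, pp))
    (k : Fin n → ℤ) (x v : E n) : L (x + intVec k, v) = L (x, v) := by
  have h := hLH (x + intVec k) v
  simp only [hper] at h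
  exact h.unique (hLH x v)

end IsLagrangianOf

namespace PiecewiseC1

variable {n : ℕ} {a b : ℝ} {γ γ' : ℝ → E n}

theorem mono {a' b' : ℝ} (h : PiecewiseC1 a b γ γ') (ha : a ≤ a') (hb : b' ≤ b) :
    PiecewiseC1 a' b' γ γ' := by
  obtain ⟨hc, s, hd, hc', C, hC⟩ := h
  have hsub : Icc a' b' ⊆ Icc a b := Icc_subset_Icc ha hb
  exact ⟨hc.mono hsub, s, fun t ht => hd t (hsub ht), hc'.mono (sdiff_subset_sdiff_left hsub),
    C, fun t ht => hC t (hsub ht)⟩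

theorem comp_add_const {d : ℝ} (h : PiecewiseC1 (a + d) (b + d) γ γ') :
    PiecewiseC1 a b (fun s => γ (s + d)) (fun s => γ' (s + d)) := by
  obtain ⟨hc, s, hd, hc', C, hC⟩ := h
  have hmaps : MapsTo (· + d) (Icc a b) (Icc (a + d) (b + d)) := fun t ht =>
    ⟨by linarith [ht.1], by linarith [ht.2]⟩
  have hshift : ∀ t, t ∉ s.image (· - d) → t + d ∉ s := fun t ht hs =>
    ht (Finset.mem_image.2 ⟨t + d, hs, add_sub_cancel_right t d⟩)
  refine ⟨hc.comp (continuous_add_const d).continuousOn hmaps, s.image (· - d),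
    fun t ht hts => (hd _ (hmaps ht) (hshift t hts)).comp_add_const t d, ?_,
    C, fun t ht => hC _ (hmaps ht)⟩
  exact hc'.comp (continuous_add_const d).continuousOn fun t ht =>
    ⟨hmaps ht.1, hshift t (by exact_mod_cast ht.2)⟩

theorem concat {m : ℝ} {σ σ' : ℝ → E n} (hσ : PiecewiseC1 a m σ σ')
    (hγ : PiecewiseC1 m b γ γ') (hm : σ m = γ m) :
    PiecewiseC1 a b (fun t => if t ≤ m then σ t else γ t)
      (fun t => if t ≤ m then σ' t else γ' t) := by
  obtain ⟨hσc, sσ, hσd, hσc', Cσ, hCσ⟩ := hσ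
  obtain ⟨hγc, sγ, hγd, hγc', Cγ, hCγ⟩ := hγ
  have hfrontier : frontier {t : ℝ | t ≤ m} = {m} := frontier_Iic
  have hleft : closure {t : ℝ | t ≤ m} = Iic m := closure_Iic m
  have hright : closure {t : ℝ | ¬t ≤ m} = Ici m := by simp only [not_le]; exact closure_Ioi m
  refine ⟨?_, sσ ∪ sγ ∪ {m}, fun t ht hts => ?_, ?_, max Cσ Cγ, fun t ht => ?_⟩
  · refine ContinuousOn.if (fun t ht => ?_) ?_ ?_
    · rw [hfrontier] at ht
      rw [ht.2]
      exact hm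
    · exact hσc.mono fun t ht => ⟨ht.1.1, by rw [hleft] at ht; exact ht.2⟩
    · exact hγc.mono fun t ht => ⟨by rw [hright] at ht; exact ht.2, ht.1.2⟩
  · simp only [Finset.mem_union, Finset.mem_singleton, not_or] at hts
    obtain ⟨⟨htσ, htγ⟩, htm⟩ := hts
    rcases lt_or_gt_of_ne htm with h | h
    · simp only [if_pos h.le]
      exact (hσd t ⟨ht.1, h.le⟩ htσ).congr_of_eventuallyEq
        (eventually_lt_nhds h |>.mono fun s hs => if_pos hs.le)
    · simp only [if_neg (not_le.2 h)]
      exact (hγd t ⟨h.le, ht.2⟩ htγ).congr_of_eventuallyEq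
        (eventually_gt_nhds h |>.mono fun s hs => if_neg (not_le.2 hs))
  · refine ContinuousOn.if (fun t ht => ?_) ?_ ?_
    · rw [hfrontier] at ht
      exact (ht.1.2 (by simp [show t = m from ht.2])).elim
    · refine hσc'.mono fun t ht => ?_
      rw [hleft] at ht
      obtain ⟨⟨htI, hts⟩, htm⟩ := ht
      exact ⟨⟨htI.1, htm⟩, fun h => hts (by simp [h])⟩
    · refine hγc'.mono fun t ht => ?_
      rw [hright] at ht
      obtain ⟨⟨htI, hts⟩, htm⟩ := ht
      exact ⟨⟨htm, htI.2⟩, fun h => hts (by simp [h])⟩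
  · by_cases htm : t ≤ m
    · simp only [if_pos htm]
      exact (hCσ t ⟨ht.1, htm⟩).trans (le_max_left _ _)
    · simp only [if_neg htm]
      exact (hCγ t ⟨(not_le.1 htm).le, ht.2⟩).trans (le_max_right _ _)

variable {L : E n × E n → ℝ}

theorem integrableOn_exp_mul_lagrangian (hLm : Measurable L) (hγ : PiecewiseC1 a b γ γ')
    (lam : ℝ) {M : ℝ} (hM : ∀ t ∈ Icc a b, |L (γ t, γ' t)| ≤ M) :
    IntegrableOn (fun t => exp (lam * t) * L (γ t, γ' t)) (Icc a b) := by
  obtain ⟨hc, s, -, hc', -⟩ := hγ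
  have hnull : (Icc a b \ (s : Set ℝ) : Set ℝ) =ᵐ[volume] Icc a b :=
    sdiff_null_ae_eq_self (s.finite_toSet.measure_zero _)
  have hγ'm : AEMeasurable γ' (volume.restrict (Icc a b)) := by
    rw [← Measure.restrict_congr_set hnull]
    exact hc'.aemeasurable (measurableSet_Icc.diff s.finite_toSet.measurableSet)
  have hL : IntegrableOn (fun t => L (γ t, γ' t)) (Icc a b) :=
    Integrable.of_bound (hLm.comp_aemeasurable
      ((hc.aemeasurable measurableSet_Icc).prodMk hγ'm)).aestronglyMeasurable M
      ((ae_restrict_mem measurableSet_Icc).mono fun t ht => hM t ht)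
  exact hL.continuousOn_mul (by fun_prop) isCompact_Icc

theorem exists_abs_lagrangian_le {c : ℝ} (hlb : ∀ x v : E n, c ≤ L (x, v))
    (hub : ∀ A : ℝ, ∃ B : ℝ, 0 ≤ B ∧ ∀ x v : E n, ‖v‖ ≤ A → L (x, v) ≤ B)
    (hγ : PiecewiseC1 a b γ γ') : ∃ M, ∀ t ∈ Icc a b, |L (γ t, γ' t)| ≤ M := by
  obtain ⟨-, -, -, -, C, hC⟩ := hγ
  obtain ⟨B, -, hB⟩ := hub C
  exact ⟨max (-c) B, fun t ht => abs_le.2 ⟨by linarith [hlb (γ t) (γ' t), le_max_left (-c) B],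
    (hB _ _ (hC t ht)).trans (le_max_right _ _)⟩⟩

end PiecewiseC1

theorem piecewiseC1_affine {n : ℕ} (a b : ℝ) (x v : E n) :
    PiecewiseC1 a b (fun t => x + t • v) (fun _ => v) := by
  refine ⟨by fun_prop, ∅, fun t _ _ => ?_, continuousOn_const, ‖v‖, fun _ _ => le_rfl⟩
  simpa using ((hasDerivAt_id t).smul_const v).const_add x

section Translation

variable {F : Type*} [NormedAddCommGroup F]

theorem integrableOn_Iic_comp_sub_iff {f : ℝ → F} (a b : ℝ) :
    IntegrableOn (fun s => f (s - a)) (Iic (b + a)) ↔ IntegrableOn f (Iic b) := by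
  rw [← preimage_sub_const_Iic]
  exact (measurePreserving_sub_right volume a).integrableOn_comp_preimage
    (measurableEmbedding_subRight a)

theorem setIntegral_Iic_comp_sub [NormedSpace ℝ F] (f : ℝ → F) (a b : ℝ) :
    ∫ s in Iic (b + a), f (s - a) = ∫ s in Iic b, f s := by
  rw [← preimage_sub_const_Iic]
  exact (measurePreserving_sub_right volume a).setIntegral_preimage_emb
    (measurableEmbedding_subRight a) f (Iic b)

end Translation

section ValueFunction

variable {n : ℕ} {L : E n × E n → ℝ} {lam : ℝ}

theorem valSet_nonempty (hlam : 0 < lam) (x : E n) : (valSet lam L x).Nonempty :=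
  ⟨_, fun _ => x, fun _ => 0, fun a _ => by simpa using piecewiseC1_affine a 0 x 0, rfl,
    (integrableOn_exp_mul_Iic hlam 0).mul_const _, rfl⟩

theorem div_le_of_mem_valSet {c : ℝ} (hlb : ∀ x v : E n, c ≤ L (x, v)) (hlam : 0 < lam)
    {x : E n} {r : ℝ} (hr : r ∈ valSet lam L x) : c / lam ≤ r := by
  obtain ⟨σ, σ', -, -, hint, rfl⟩ := hr
  calc c / lam = ∫ s in Iic (0 : ℝ), exp (lam * s) * c := by
        rw [integral_mul_const, integral_exp_mul_Iic hlam, mul_zero, exp_zero]; ring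
    _ ≤ _ := setIntegral_mono_on ((integrableOn_exp_mul_Iic hlam 0).mul_const _) hint
        measurableSet_Iic fun s _ => mul_le_mul_of_nonneg_left (hlb _ _) (exp_pos _).le

theorem div_le_ubar {c : ℝ} (hlb : ∀ x v : E n, c ≤ L (x, v)) (hlam : 0 < lam) (x : E n) :
    c / lam ≤ ubar lam L x :=
  le_csInf (valSet_nonempty hlam x) fun _ => div_le_of_mem_valSet hlb hlam

theorem bddBelow_valSet {c : ℝ} (hlb : ∀ x v : E n, c ≤ L (x, v)) (hlam : 0 < lam) (x : E n) :
    BddBelow (valSet lam L x) :=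
  ⟨c / lam, fun _ => div_le_of_mem_valSet hlb hlam⟩

theorem valSet_subset_valSet_add {w : E n} (hw : ∀ x v : E n, L (x + w, v) = L (x, v))
    (x : E n) : valSet lam L x ⊆ valSet lam L (x + w) := by
  rintro _ ⟨σ, σ', hσ, rfl, hint, rfl⟩
  refine ⟨fun s => σ s + w, σ', fun a ha => ?_, rfl, by simpa only [hw] using hint,
    by simp only [hw]⟩
  obtain ⟨hc, s, hd, hc', C, hC⟩ := hσ a ha
  exact ⟨hc.add continuousOn_const, s, fun t ht hts => (hd t ht hts).add_const w, hc', C, hC⟩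

theorem ubar_add_intVec
    (hper : ∀ (k : Fin n → ℤ) (x v : E n), L (x + intVec k, v) = L (x, v))
    (k : Fin n → ℤ) (x : E n) : ubar lam L (x + intVec k) = ubar lam L x := by
  have hneg : ∀ x v : E n, L (x + -intVec k, v) = L (x, v) := fun x v => by
    rw [← hper k, neg_add_cancel_right]
  refine congrArg sInf (Subset.antisymm ?_ (valSet_subset_valSet_add (hper k) x))
  simpa using valSet_subset_valSet_add (lam := lam) hneg (x + intVec k)

end ValueFunction

section Domination

variable {n : ℕ} {L : E n × E n → ℝ} {lam : ℝ}

theorem exp_mul_add_integral_mem_valSet (hLm : Measurable L) {c : ℝ}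
    (hlb : ∀ x v : E n, c ≤ L (x, v))
    (hub : ∀ A : ℝ, ∃ B : ℝ, 0 ≤ B ∧ ∀ x v : E n, ‖v‖ ≤ A → L (x, v) ≤ B)
    {a : ℝ} (ha : a < 0) {γ γ' : ℝ → E n} (hγ : PiecewiseC1 a 0 γ γ') {r : ℝ}
    (hr : r ∈ valSet lam L (γ a)) :
    exp (lam * a) * r + ∫ t in a..0, exp (lam * t) * L (γ t, γ' t) ∈ valSet lam L (γ 0) := by
  obtain ⟨σ, σ', hσ, hσa, hσint, rfl⟩ := hr
  set f : ℝ → ℝ := fun s => exp (lam * s) * L (σ s, σ' s)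
  set τ : ℝ → E n := fun s => if s ≤ a then σ (s - a) else γ s
  set τ' : ℝ → E n := fun s => if s ≤ a then σ' (s - a) else γ' s
  have hleft : EqOn (fun s => exp (lam * s) * L (τ s, τ' s))
      (fun s => exp (lam * a) * f (s - a)) (Iic a) := fun s hs => by
    simp only [τ, τ', f, if_pos (show s ≤ a from hs), ← mul_assoc, ← exp_add]
    ring_nf
  have hright : EqOn (fun s => exp (lam * s) * L (τ s, τ' s))
      (fun s => exp (lam * s) * L (γ s, γ' s)) (Ioc a 0) := fun s hs => by
    simp only [τ, τ', if_neg (not_le.2 hs.1)]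
  have hσint' := (integrableOn_Iic_comp_sub_iff a 0).2 hσint
  have hσval := setIntegral_Iic_comp_sub f a 0
  rw [zero_add] at hσint' hσval
  have hIic : IntegrableOn (fun s => exp (lam * a) * f (s - a)) (Iic a) := hσint'.const_mul _
  have hIoc : IntegrableOn (fun s => exp (lam * s) * L (γ s, γ' s)) (Ioc a 0) := by
    obtain ⟨M, hM⟩ := hγ.exists_abs_lagrangian_le hlb hub
    exact (hγ.integrableOn_exp_mul_lagrangian hLm lam hM).mono_set Ioc_subset_Icc_self
  refine ⟨τ, τ', fun A _ => ?_, if_neg (not_le.2 ha), ?_, ?_⟩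
  · have hσ₀ : PiecewiseC1 (min A a - 1 + -a) (a + -a) σ σ' := by
      rw [add_neg_cancel]
      exact hσ _ (by linarith [min_le_right A a])
    have hσ₁ := hσ₀.comp_add_const
    simp only [← sub_eq_add_neg] at hσ₁
    exact (hσ₁.concat hγ (by rw [sub_self, hσa])).mono (by linarith [min_le_left A a]) le_rfl
  · rw [← Iic_union_Ioc_eq_Iic ha.le]
    exact (hIic.congr_fun hleft.symm measurableSet_Iic).union
      (hIoc.congr_fun hright.symm measurableSet_Ioc)
  · conv_rhs => rw [← Iic_union_Ioc_eq_Iic ha.le]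
    rw [setIntegral_union (Iic_disjoint_Ioc le_rfl) measurableSet_Ioc
      (hIic.congr_fun hleft.symm measurableSet_Iic) (hIoc.congr_fun hright.symm measurableSet_Ioc),
      setIntegral_congr_fun measurableSet_Iic hleft, setIntegral_congr_fun measurableSet_Ioc hright,
      integral_const_mul, hσval, intervalIntegral.integral_of_le ha.le]

theorem dominated_of_forall_neg {u : E n → ℝ}
    (h : ∀ a < 0, ∀ γ γ' : ℝ → E n, PiecewiseC1 a 0 γ γ' →
      u (γ 0) - exp (lam * a) * u (γ a) ≤ ∫ t in a..0, exp (lam * t) * L (γ t, γ' t)) :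
    Dominated lam L u := by
  intro a b hab γ γ' hγ
  set I := ∫ t in a..b, exp (lam * t) * L (γ t, γ' t)
  have hshift : PiecewiseC1 (a - b) 0 (fun s => γ (s + b)) (fun s => γ' (s + b)) :=
    PiecewiseC1.comp_add_const (by rwa [sub_add_cancel, zero_add])
  have hint : ∫ t in (a - b)..0, exp (lam * t) * L (γ (t + b), γ' (t + b))
      = (exp (lam * b))⁻¹ * I := by
    calc _ = ∫ t in (a - b)..0,
          (exp (lam * b))⁻¹ * (exp (lam * (t + b)) * L (γ (t + b), γ' (t + b))) := by
          congr 1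
          ext t
          rw [← exp_neg, ← mul_assoc, ← exp_add]
          ring_nf
      _ = (exp (lam * b))⁻¹ * I := by
          rw [intervalIntegral.integral_comp_add_right
            (fun t => (exp (lam * b))⁻¹ * (exp (lam * t) * L (γ t, γ' t))), sub_add_cancel,
            zero_add, intervalIntegral.integral_const_mul]
  have hdom := h (a - b) (by linarith) _ _ hshift
  rw [zero_add, sub_add_cancel, hint, mul_sub, exp_sub] at hdom
  calc exp (lam * b) * u (γ b) - exp (lam * a) * u (γ a)
      = exp (lam * b) * (u (γ b) - exp (lam * a) / exp (lam * b) * u (γ a)) := by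
        field_simp
    _ ≤ exp (lam * b) * ((exp (lam * b))⁻¹ * I) := by gcongr
    _ = I := by field_simp

theorem dominated_ubar (hLm : Measurable L) {c : ℝ} (hlb : ∀ x v : E n, c ≤ L (x, v))
    (hub : ∀ A : ℝ, ∃ B : ℝ, 0 ≤ B ∧ ∀ x v : E n, ‖v‖ ≤ A → L (x, v) ≤ B)
    (hlam : 0 < lam) : Dominated lam L (ubar lam L) := by
  refine dominated_of_forall_neg fun a ha γ γ' hγ => ?_
  set I := ∫ t in a..0, exp (lam * t) * L (γ t, γ' t)
  have hle : ∀ r ∈ valSet lam L (γ a), (ubar lam L (γ 0) - I) / exp (lam * a) ≤ r := by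
    intro r hr
    rw [div_le_iff₀' (exp_pos _), sub_le_iff_le_add]
    exact csInf_le (bddBelow_valSet hlb hlam _)
      (exp_mul_add_integral_mem_valSet hLm hlb hub ha hγ hr)
  have h : (ubar lam L (γ 0) - I) / exp (lam * a) ≤ ubar lam L (γ a) :=
    le_csInf (valSet_nonempty hlam _) hle
  rw [div_le_iff₀' (exp_pos _)] at h
  linarith

theorem integral_exp_mul_lagrangian_affine_le (hLm : Measurable L) {c B : ℝ}
    (hlb : ∀ x v : E n, c ≤ L (x, v)) (hB0 : 0 ≤ B)
    (hB : ∀ x v : E n, ‖v‖ ≤ 1 → L (x, v) ≤ B) (hlam : 0 ≤ lam) {T : ℝ}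
    (hT : 0 ≤ T) (x v : E n) (hv : ‖v‖ ≤ 1) :
    ∫ t in (-T)..0, exp (lam * t) * L (x + t • v, v) ≤ B * T := by
  have hM : ∀ t ∈ Icc (-T) 0, |L (x + t • v, v)| ≤ max (-c) B := fun t _ => abs_le.2
    ⟨by linarith [hlb (x + t • v) v, le_max_left (-c) B],
      (hB _ _ hv).trans (le_max_right _ _)⟩
  have hint := (piecewiseC1_affine (-T) 0 x v).integrableOn_exp_mul_lagrangian hLm lam hM
  calc _ ≤ ∫ _ in (-T)..0, B := by
        refine intervalIntegral.integral_mono_on (by linarith)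
          ((intervalIntegrable_iff_integrableOn_Icc_of_le (by linarith)).2 hint)
          intervalIntegrable_const fun t ht => ?_
        have he1 : exp (lam * t) ≤ 1 := exp_le_one_iff.2 (by nlinarith [ht.2])
        nlinarith [mul_le_mul_of_nonneg_left (hB (x + t • v) v hv) (exp_pos (lam * t)).le,
          mul_le_of_le_one_left hB0 he1]
    _ = B * T := by simp [mul_comm]

theorem Dominated.sub_le {u : E n → ℝ} (hu : Dominated lam L u) (hlam : 0 < lam)
    (hLm : Measurable L) {c B : ℝ} (hc : c ≤ 0) (hlb : ∀ x v : E n, c ≤ L (x, v))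
    (hB0 : 0 ≤ B) (hB : ∀ x v : E n, ‖v‖ ≤ 1 → L (x, v) ≤ B)
    (hu_lb : ∀ x, c / lam ≤ u x)
    (x y : E n) : u x - u y ≤ (B - c) * ‖x - y‖ := by
  obtain rfl | hxy := eq_or_ne x y
  · simp
  set T := ‖x - y‖
  have hT : 0 < T := norm_pos_iff.2 (sub_ne_zero.2 hxy)
  set v := T⁻¹ • (x - y)
  have hv : ‖v‖ = 1 := by
    rw [norm_smul, norm_inv, Real.norm_of_nonneg hT.le, inv_mul_cancel₀ hT.ne']
  have hy : x + (-T) • v = y := by simp [v, smul_smul, hT.ne']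
  have hdom := hu (-T) 0 (by linarith) _ _ (piecewiseC1_affine (-T) 0 x v)
  simp only [zero_smul, add_zero, mul_zero, exp_zero, one_mul, hy] at hdom
  have hI := integral_exp_mul_lagrangian_affine_le hLm hlb hB0 hB hlam.le hT.le x v hv.le
  have hexp : 1 - lam * T ≤ exp (lam * -T) := by linarith [add_one_le_exp (lam * -T)]
  have hexp1 : exp (lam * -T) ≤ 1 := exp_le_one_iff.2 (by nlinarith)
  have hc' : 0 ≤ -c / lam := div_nonneg (by linarith) hlam.le
  calc u x - u y = (u x - exp (lam * -T) * u y) + (exp (lam * -T) - 1) * u y := by ring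
    _ ≤ B * T + (exp (lam * -T) - 1) * (c / lam) :=
        add_le_add (hdom.trans hI) (mul_le_mul_of_nonpos_left (hu_lb y) (by linarith))
    _ = B * T + (1 - exp (lam * -T)) * (-c / lam) := by ring
    _ ≤ B * T + lam * T * (-c / lam) := by gcongr; linarith
    _ = (B - c) * T := by field_simp; ring

theorem Dominated.abs_sub_le {u : E n → ℝ} (hu : Dominated lam L u) (hlam : 0 < lam)
    (hLm : Measurable L) {c B : ℝ} (hc : c ≤ 0) (hlb : ∀ x v : E n, c ≤ L (x, v))
    (hB0 : 0 ≤ B) (hB : ∀ x v : E n, ‖v‖ ≤ 1 → L (x, v) ≤ B)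
    (hu_lb : ∀ x, c / lam ≤ u x)
    (x y : E n) : |u x - u y| ≤ (B - c) * ‖x - y‖ :=
  abs_sub_le_iff.2 ⟨hu.sub_le hlam hLm hc hlb hB0 hB hu_lb x y,
    norm_sub_rev x y ▸ hu.sub_le hlam hLm hc hlb hB0 hB hu_lb y x⟩

end Domination

theorem stmt_10_general {n : ℕ}
    (H L : E n × E n → ℝ) (hH : Tonelli H) (hLH : IsLagrangianOf L H)
    (hper : ∀ (k : Fin n → ℤ) (x pp : E n), H (x + intVec k, pp) = H (x, pp)) :
    -- (1) finiteness and periodicity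
    ((∀ lam : ℝ, 0 < lam → ∀ x : E n,
        (valSet lam L x).Nonempty ∧ BddBelow (valSet lam L x)) ∧
      (∀ lam : ℝ, 0 < lam → ∀ (k : Fin n → ℤ) (x : E n),
        ubar lam L (x + intVec k) = ubar lam L x)) ∧
    -- (2) Lipschitz, uniformly in λ
    (∃ K : ℝ, 0 < K ∧ ∀ lam : ℝ, 0 < lam → ∀ x y : E n,
        |ubar lam L x - ubar lam L y| ≤ K * ‖x - y‖) ∧
    -- (3) domination
    (∀ lam : ℝ, 0 < lam → Dominated lam L (ubar lam L)) := by
  have hHc : Continuous H := hH.1.continuous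
  have hLm : Measurable L := hLH.measurable hHc
  obtain ⟨c, hc, hlb⟩ := hLH.exists_forall_le hHc hper
  have hub := hLH.exists_le_of_norm_le hH.2.2
  obtain ⟨B, hB0, hB⟩ := hub 1
  refine ⟨⟨fun lam hlam x => ⟨valSet_nonempty hlam x, bddBelow_valSet hlb hlam x⟩,
    fun lam _ => ubar_add_intVec (hLH.periodic hper)⟩,
    ⟨B - c + 1, by linarith, fun lam hlam x y => ?_⟩,
    fun lam hlam => dominated_ubar hLm hlb hub hlam⟩
  refine ((dominated_ubar hLm hlb hub hlam).abs_sub_le hlam hLm hc hlb hB0 hB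
    (div_le_ubar hlb hlam) x y).trans ?_
  gcongr
  linarith

/-- Properties of the value function `ū_λ`: it is well defined (finite),
ℤⁿ-periodic, Lipschitz with a constant independent of `λ`, and λ-dominated. -/
theorem stmt_10 {n : ℕ} (hn : 1 ≤ n)
    (H L : E n × E n → ℝ) (hH : Tonelli H) (hLH : IsLagrangianOf L H)
    (hper : ∀ (k : Fin n → ℤ) (x pp : E n), H (x + intVec k, pp) = H (x, pp)) :
    -- (1) finiteness and periodicity
    ((∀ lam : ℝ, 0 < lam → ∀ x : E n,
        (valSet lam L x).Nonempty ∧ BddBelow (valSet lam L x)) ∧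
      (∀ lam : ℝ, 0 < lam → ∀ (k : Fin n → ℤ) (x : E n),
        ubar lam L (x + intVec k) = ubar lam L x)) ∧
    -- (2) Lipschitz, uniformly in λ
    (∃ K : ℝ, 0 < K ∧ ∀ lam : ℝ, 0 < lam → ∀ x y : E n,
        |ubar lam L x - ubar lam L y| ≤ K * ‖x - y‖) ∧
    -- (3) domination
    (∀ lam : ℝ, 0 < lam → Dominated lam L (ubar lam L)) :=
  stmt_10_general H L hH hLH hper
end
end

section
/- Let H be a Tonelli Hamiltonian on ℝⁿ × ℝⁿ, λ > 0, and let Φᵗ be a complete flow of the λ-discounted Hamiltonian vector field. Let u : ℝⁿ → ℝ be locally Lipschitz and satisfy λu(x) + H(x, Du(x)) = 0 at every point x where u is differentiable, and define F(x,p) = λu(x) + H(x,p). If F(y,q) ≥ 0 for all (y,q) ∈ ℝⁿ × ℝⁿ, then for every (x,p), F(Φᵗ(x,p)) → 0 as t → +∞; in particular every ω-limit point (x̄,p̄) of the orbit t ↦ Φᵗ(x,p) satisfies F(x̄,p̄) = 0. -/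
open Set Filter MeasureTheory Real

noncomputable section

/-- A complete flow of the λ-discounted Hamiltonian vector field of `H`. -/
def IsDiscountedFlow {n : ℕ} (lam : ℝ) (H : E n × E n → ℝ)
    (Φ : ℝ → E n × E n → E n × E n) : Prop :=
  Φ 0 = id ∧ (∀ t s : ℝ, ∀ z : E n × E n, Φ (t + s) z = Φ t (Φ s z)) ∧
  ∀ (z : E n × E n) (t : ℝ),
    HasDerivAt (fun s => (Φ s z).1) (Hp H (Φ t z).1 (Φ t z).2) t ∧
    HasDerivAt (fun s => (Φ s z).2) (-Hx H (Φ t z).1 (Φ t z).2 - lam • (Φ t z).2) t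

section AuxLemmas

variable {n : ℕ}

local notation "⟪" x ", " y "⟫" => @inner ℝ _ _ x y

lemma inner_gradient {f : E n → ℝ} {x v : E n} :
    ⟪gradient f x, v⟫ = fderiv ℝ f x v := by
  rw [gradient]; exact InnerProductSpace.toDual_symm_apply

lemma norm_gradient {f : E n → ℝ} {x : E n} : ‖gradient f x‖ = ‖fderiv ℝ f x‖ := by
  rw [gradient]; exact LinearIsometryEquiv.norm_map _ _

variable {H : E n × E n → ℝ}

lemma diffH (hH2 : ContDiff ℝ 2 H) : Differentiable ℝ H := hH2.differentiable (by norm_num)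

lemma inner_Hx (hH2 : ContDiff ℝ 2 H) (x p v : E n) :
    ⟪Hx H x p, v⟫ = fderiv ℝ H (x, p) (v, 0) := by
  have h1 : HasFDerivAt (fun y => H (y, p))
      ((fderiv ℝ H (x, p)).comp (ContinuousLinearMap.inl ℝ (E n) (E n))) x :=
    ((diffH hH2) (x, p)).hasFDerivAt.comp x (hasFDerivAt_prodMk_left x p)
  rw [Hx, inner_gradient, h1.fderiv]; rfl

lemma inner_Hp (hH2 : ContDiff ℝ 2 H) (x p w : E n) :
    ⟪Hp H x p, w⟫ = fderiv ℝ H (x, p) (0, w) := by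
  have h1 : HasFDerivAt (fun q => H (x, q))
      ((fderiv ℝ H (x, p)).comp (ContinuousLinearMap.inr ℝ (E n) (E n))) p :=
    ((diffH hH2) (x, p)).hasFDerivAt.comp p (hasFDerivAt_prodMk_right x p)
  rw [Hp, inner_gradient, h1.fderiv]; rfl

lemma fderiv_H_split (hH2 : ContDiff ℝ 2 H) (x p v w : E n) :
    fderiv ℝ H (x, p) (v, w) = ⟪Hx H x p, v⟫ + ⟪Hp H x p, w⟫ := by
  rw [inner_Hx hH2, inner_Hp hH2]
  have : ((v, w) : E n × E n) = (v, 0) + (0, w) := by simp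
  rw [this, map_add]

lemma continuous_Hx (hH2 : ContDiff ℝ 2 H) :
    Continuous (fun z : E n × E n => Hx H z.1 z.2) := by
  have hcd : Continuous (fun z : E n × E n => fderiv ℝ H z) :=
    hH2.continuous_fderiv (by norm_num)
  have heq : (fun z : E n × E n => Hx H z.1 z.2) = fun z =>
      (InnerProductSpace.toDual ℝ (E n)).symm
        ((fderiv ℝ H z).comp (ContinuousLinearMap.inl ℝ (E n) (E n))) := by
    funext z
    have h1 : HasFDerivAt (fun y => H (y, z.2))
        ((fderiv ℝ H z).comp (ContinuousLinearMap.inl ℝ (E n) (E n))) z.1 := by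
      have := ((diffH hH2) z).hasFDerivAt.comp z.1 (hasFDerivAt_prodMk_left (𝕜 := ℝ) z.1 z.2)
      exact this
    rw [Hx, gradient, h1.fderiv]
  rw [heq]
  exact (LinearIsometryEquiv.continuous _).comp (hcd.clm_comp continuous_const)

lemma continuous_Hp (hH2 : ContDiff ℝ 2 H) :
    Continuous (fun z : E n × E n => Hp H z.1 z.2) := by
  have hcd : Continuous (fun z : E n × E n => fderiv ℝ H z) :=
    hH2.continuous_fderiv (by norm_num)
  have heq : (fun z : E n × E n => Hp H z.1 z.2) = fun z =>
      (InnerProductSpace.toDual ℝ (E n)).symm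
        ((fderiv ℝ H z).comp (ContinuousLinearMap.inr ℝ (E n) (E n))) := by
    funext z
    have h1 : HasFDerivAt (fun q => H (z.1, q))
        ((fderiv ℝ H z).comp (ContinuousLinearMap.inr ℝ (E n) (E n))) z.2 := by
      have := ((diffH hH2) z).hasFDerivAt.comp z.2 (hasFDerivAt_prodMk_right (𝕜 := ℝ) z.1 z.2)
      exact this
    rw [Hp, gradient, h1.fderiv]
  rw [heq]
  exact (LinearIsometryEquiv.continuous _).comp (hcd.clm_comp continuous_const)

end AuxLemmas
section Convexity

variable {n : ℕ} {H : E n × E n → ℝ}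

local notation "⟪" x ", " y "⟫" => @inner ℝ _ _ x y

lemma contDiff_fiber (hH2 : ContDiff ℝ 2 H) (x : E n) :
    ContDiff ℝ 2 (fun w : E n => H (x, w)) :=
  hH2.comp (contDiff_const.prodMk contDiff_id)

lemma contDiff_Hp (hH2 : ContDiff ℝ 2 H) (x : E n) : ContDiff ℝ 1 (Hp H x) := by
  have h1 : ContDiff ℝ 1 (fun w => fderiv ℝ (fun q : E n => H (x, q)) w) :=
    (contDiff_fiber hH2 x).fderiv_right (m := 1) (by norm_num)
  have : (Hp H x) = fun w =>
      (InnerProductSpace.toDual ℝ (E n)).symm (fderiv ℝ (fun q : E n => H (x, q)) w) := rfl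
  rw [this]
  exact (LinearIsometryEquiv.toContinuousLinearEquiv
    (InnerProductSpace.toDual ℝ (E n)).symm).contDiff.comp h1

lemma convex_ineq (hH : Tonelli H) (x p q : E n) :
    ⟪Hp H x p, q - p⟫ ≤ H (x, q) - H (x, p) := by
  rcases eq_or_ne q p with rfl | hqp
  · simp
  have hv : q - p ≠ 0 := sub_ne_zero.2 hqp
  set v := q - p with hvdef
  set c : ℝ → E n := fun s => p + s • v with hc
  have hcs : ∀ s : ℝ, HasDerivAt c v s := by
    intro s
    exact (((hasDerivAt_id' s).smul_const v).const_add p).congr_deriv (by simp)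
  -- φ
  set φ : ℝ → ℝ := fun s => H (x, c s) with hφ
  set ψ : ℝ → ℝ := fun s => ⟪Hp H x (c s), v⟫ with hψ
  have hfibd : Differentiable ℝ (fun w : E n => H (x, w)) :=
    (contDiff_fiber hH.1 x).differentiable (by norm_num)
  have hφ' : ∀ s, HasDerivAt φ (ψ s) s := by
    intro s
    have h1 : HasDerivAt (fun s => H (x, c s))
        (fderiv ℝ (fun w : E n => H (x, w)) (c s) v) s :=
      (hfibd (c s)).hasFDerivAt.comp_hasDerivAt s (hcs s)
    have h2 : ⟪Hp H x (c s), v⟫ = fderiv ℝ (fun w : E n => H (x, w)) (c s) v := by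
      rw [Hp, inner_gradient]
    show HasDerivAt φ (⟪Hp H x (c s), v⟫) s
    rw [h2]; exact h1
  have hHpd : Differentiable ℝ (Hp H x) := (contDiff_Hp hH.1 x).differentiable (by norm_num)
  have hψ' : ∀ s, HasDerivAt ψ ⟪v, fderiv ℝ (Hp H x) (c s) v⟫ s := by
    intro s
    have h1 : HasDerivAt (fun s => Hp H x (c s)) (fderiv ℝ (Hp H x) (c s) v) s :=
      (hHpd (c s)).hasFDerivAt.comp_hasDerivAt s (hcs s)
    have h2 := (innerSL ℝ v).hasFDerivAt.comp_hasDerivAt s h1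
    have h3 : ψ = fun s => (innerSL ℝ v) (Hp H x (c s)) := by
      funext s; rw [hψ]; exact real_inner_comm _ _
    rw [h3]; exact h2
  have hψnonneg : ∀ s : ℝ, (0:ℝ) ≤ ⟪v, fderiv ℝ (Hp H x) (c s) v⟫ := by
    intro s
    have := hH.2.1 x (c s) v hv
    rw [real_inner_comm]
    exact le_of_lt this
  have hψmono : Monotone ψ := by
    apply monotone_of_deriv_nonneg
    · exact fun s => (hψ' s).differentiableAt
    · intro s; rw [(hψ' s).deriv]; exact hψnonneg s
  have h01 : (0:ℝ) < 1 := one_pos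
  obtain ⟨m, hm, hslope⟩ := exists_hasDerivAt_eq_slope φ ψ h01
    (fun s _ => (hφ' s).continuousAt.continuousWithinAt) (fun s _ => hφ' s)
  have hφ1 : φ 1 = H (x, q) := by simp [hφ, hc, hvdef]
  have hφ0 : φ 0 = H (x, p) := by simp [hφ, hc]
  have hψ0 : ψ 0 = ⟪Hp H x p, q - p⟫ := by simp [hψ, hc, hvdef]
  have : ψ 0 ≤ ψ m := hψmono (le_of_lt hm.1)
  rw [hslope] at this
  rw [hφ1, hφ0] at this
  rw [← hψ0]
  calc ψ 0 ≤ (H (x,q) - H (x,p)) / (1 - 0) := this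
    _ = H (x,q) - H (x,p) := by norm_num

end Convexity
section PointwiseStructure

open Metric
open scoped ENNReal NNReal

variable {n : ℕ} {H : E n × E n → ℝ} {u : E n → ℝ} {lam : ℝ}

local notation "⟪" x ", " y "⟫" => @inner ℝ _ _ x y

/-- At a differentiability point of `u`, the gradient satisfies both the HJ equation and
the equilibrium identity. -/
lemma at_diff_point (hH : Tonelli H) (hlam : 0 < lam)
    (hHJ : ∀ x : E n, DifferentiableAt ℝ u x → lam * u x + H (x, gradient u x) = 0)
    (hFnonneg : ∀ z : E n × E n, 0 ≤ lam * u z.1 + H z)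
    (y : E n) (hy : DifferentiableAt ℝ u y) :
    lam * u y + H (y, gradient u y) = 0 ∧
      lam • gradient u y + Hx H y (gradient u y) = 0 := by
  refine ⟨hHJ y hy, ?_⟩
  set q := gradient u y with hq
  set g : E n → ℝ := fun z => lam * u z + H (z, q) with hg
  have hg0 : g y = 0 := hHJ y hy
  have hmin : IsLocalMin g y := by
    apply Filter.Eventually.of_forall
    intro z
    rw [hg0]
    exact hFnonneg (z, q)
  have hgd2 : DifferentiableAt ℝ (fun z : E n => H (z, q)) y :=
    ((diffH hH.1) (y, q)).comp y (DifferentiableAt.prodMk differentiableAt_fun_id (differentiableAt_const q))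
  have hgd : DifferentiableAt ℝ g y := (hy.const_mul lam).add hgd2
  have hfz := hmin.fderiv_eq_zero
  -- compute fderiv g y
  have hsplit : fderiv ℝ g y = lam • fderiv ℝ u y + fderiv ℝ (fun z : E n => H (z, q)) y := by
    rw [hg]
    rw [fderiv_fun_add (by exact hy.const_mul lam) hgd2]
    congr 1
    rw [fderiv_const_mul hy]
  have key : ∀ v : E n, ⟪lam • q + Hx H y q, v⟫ = 0 := by
    intro v
    have h1 : ⟪Hx H y q, v⟫ = fderiv ℝ (fun z : E n => H (z, q)) y v := by
      have h2 : HasFDerivAt (fun z : E n => H (z, q))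
          ((fderiv ℝ H (y, q)).comp (ContinuousLinearMap.inl ℝ (E n) (E n))) y :=
        ((diffH hH.1) (y, q)).hasFDerivAt.comp y (hasFDerivAt_prodMk_left y q)
      rw [Hx, inner_gradient, h2.fderiv]; try rfl
    have h0 : (fderiv ℝ g y) v = 0 := by rw [hfz]; rfl
    rw [hsplit] at h0
    simp only [ContinuousLinearMap.add_apply, ContinuousLinearMap.coe_smul',
      Pi.smul_apply, smul_eq_mul] at h0
    rw [inner_add_left, inner_smul_left, RCLike.conj_to_real, inner_gradient, h1]
    simpa using h0
  have := key (lam • q + Hx H y q)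
  exact inner_self_eq_zero.mp this

/-- Differentiability points of a locally Lipschitz function are dense, with locally
bounded gradients; consequently every point carries a "generalized critical pair". -/
lemma exists_equilibrium (hH : Tonelli H) (hlam : 0 < lam)
    (hulip : LocallyLipschitz u)
    (hHJ : ∀ x : E n, DifferentiableAt ℝ u x → lam * u x + H (x, gradient u x) = 0)
    (hFnonneg : ∀ z : E n × E n, 0 ≤ lam * u z.1 + H z)
    (y : E n) :
    ∃ q : E n, lam * u y + H (y, q) = 0 ∧ lam • q + Hx H y q = 0 := by
  obtain ⟨K, t, ht, hlip⟩ := hulip y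
  obtain ⟨r, hr, hball⟩ := Metric.mem_nhds_iff.1 ht
  have hlipb : LipschitzOnWith K u (ball y r) := hlip.mono hball
  -- a.e. differentiability in the ball
  have hae : ∀ᵐ x : E n, x ∈ ball y r → DifferentiableWithinAt ℝ u (ball y r) x :=
    hlipb.ae_differentiableWithinAt_of_mem
  -- for each k, a differentiability point close to y
  have hpt : ∀ k : ℕ, ∃ x : E n, dist x y < min r (1 / (k + 1)) ∧ DifferentiableAt ℝ u x := by
    intro k
    by_contra hcon
    push_neg at hcon
    have hsub : ball y (min r (1 / (k + 1))) ⊆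
        {x : E n | ¬(x ∈ ball y r → DifferentiableWithinAt ℝ u (ball y r) x)} := by
      intro x hx
      simp only [mem_setOf_eq]
      intro himp
      have hxr : x ∈ ball y r := by
        exact mem_ball.2 (lt_of_lt_of_le (mem_ball.1 hx) (min_le_left _ _))
      exact hcon x (mem_ball.1 hx) ((himp hxr).differentiableAt (isOpen_ball.mem_nhds hxr))
    have h0 : volume {x : E n | ¬(x ∈ ball y r → DifferentiableWithinAt ℝ u (ball y r) x)} = 0 := by
      have h := hae
      rwa [MeasureTheory.ae_iff] at h
    have hrk : (0:ℝ) < min r (1 / (k + 1)) := lt_min hr (by positivity)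
    have hpos : (0:ℝ≥0∞) < (volume : MeasureTheory.Measure (E n)) (ball y (min r (1 / (k + 1)))) :=
      Metric.measure_ball_pos volume y hrk
    have := MeasureTheory.measure_mono (μ := (volume : MeasureTheory.Measure (E n))) hsub
    rw [h0] at this
    exact absurd (le_antisymm this (by simp)) (ne_of_gt hpos)
  choose ypt hypt hydiff using hpt
  -- gradient bound
  have hgb : ∀ k : ℕ, ‖gradient u (ypt k)‖ ≤ K := by
    intro k
    rw [norm_gradient]
    have hmem : ypt k ∈ ball y r :=
      mem_ball.2 (lt_of_lt_of_le (hypt k) (min_le_left _ _))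
    exact norm_fderiv_le_of_lipschitzOn ℝ (isOpen_ball.mem_nhds hmem) hlipb
  have hytends : Filter.Tendsto ypt Filter.atTop (nhds y) := by
    rw [tendsto_iff_dist_tendsto_zero]
    have h1 : Filter.Tendsto (fun k : ℕ => 1 / ((k:ℝ) + 1)) Filter.atTop (nhds 0) :=
      tendsto_one_div_add_atTop_nhds_zero_nat
    apply squeeze_zero (fun k => dist_nonneg) (fun k => le_of_lt
      (lt_of_lt_of_le (hypt k) (min_le_right _ _))) h1
  obtain ⟨qbar, _, φ, hφmono, hqtends⟩ :=
    (isCompact_closedBall (0 : E n) K).tendsto_subseq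
      (fun k => mem_closedBall_zero_iff.2 (hgb k))
  have hyφ : Filter.Tendsto (fun k => ypt (φ k)) Filter.atTop (nhds y) :=
    hytends.comp hφmono.tendsto_atTop
  have hpair : Filter.Tendsto (fun k => ((ypt (φ k) : E n), gradient u (ypt (φ k))))
      Filter.atTop (nhds (y, qbar)) := hyφ.prodMk_nhds hqtends
  have heq1 : ∀ k, lam * u (ypt (φ k)) + H (ypt (φ k), gradient u (ypt (φ k))) = 0 :=
    fun k => (at_diff_point hH hlam hHJ hFnonneg _ (hydiff (φ k))).1
  have heq2 : ∀ k, lam • gradient u (ypt (φ k)) + Hx H (ypt (φ k)) (gradient u (ypt (φ k))) = 0 :=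
    fun k => (at_diff_point hH hlam hHJ hFnonneg _ (hydiff (φ k))).2
  refine ⟨qbar, ?_, ?_⟩
  · have hcont : Continuous (fun w : E n × E n => lam * u w.1 + H w) :=
      (continuous_const.mul (hulip.continuous.comp continuous_fst)).add hH.1.continuous
    have := (hcont.continuousAt (x := (y, qbar))).tendsto.comp hpair
    have hconst : (fun k => lam * u (ypt (φ k)) + H (ypt (φ k), gradient u (ypt (φ k)))) =
        fun _ => (0:ℝ) := funext heq1
    rw [show ((fun w : E n × E n => lam * u w.1 + H w) ∘
        fun k => (ypt (φ k), gradient u (ypt (φ k)))) =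
        fun k => lam * u (ypt (φ k)) + H (ypt (φ k), gradient u (ypt (φ k))) from rfl,
      hconst] at this
    exact (tendsto_nhds_unique tendsto_const_nhds this).symm
  · have hcont : Continuous (fun w : E n × E n => lam • w.2 + Hx H w.1 w.2) :=
      (continuous_snd.const_smul lam).add (continuous_Hx hH.1)
    have := (hcont.continuousAt (x := (y, qbar))).tendsto.comp hpair
    have hconst : (fun k => lam • gradient u (ypt (φ k)) +
        Hx H (ypt (φ k)) (gradient u (ypt (φ k)))) = fun _ => (0 : E n) := funext heq2
    rw [show ((fun w : E n × E n => lam • w.2 + Hx H w.1 w.2) ∘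
        fun k => (ypt (φ k), gradient u (ypt (φ k)))) =
        fun k => lam • gradient u (ypt (φ k)) + Hx H (ypt (φ k)) (gradient u (ypt (φ k)))
        from rfl, hconst] at this
    exact (tendsto_nhds_unique tendsto_const_nhds this).symm

end PointwiseStructure
section OrbitDeriv

variable {n : ℕ} {H : E n × E n → ℝ} {lam : ℝ} {Φ : ℝ → E n × E n → E n × E n}

local notation "⟪" x ", " y "⟫" => @inner ℝ _ _ x y

lemma orbit_hasDerivAt (hH2 : ContDiff ℝ 2 H) (hΦ : IsDiscountedFlow lam H Φ)
    (z : E n × E n) (t : ℝ) :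
    HasDerivAt (fun s => H (Φ s z))
      (-(lam * ⟪Hp H (Φ t z).1 (Φ t z).2, (Φ t z).2⟫)) t := by
  obtain ⟨-, -, hd⟩ := hΦ
  set xt := (Φ t z).1
  set pt := (Φ t z).2
  have hpair : HasDerivAt (fun s => Φ s z)
      ((Hp H xt pt, -Hx H xt pt - lam • pt)) t := by
    have h := (hd z t).1.prodMk (hd z t).2
    simpa using h
  have hH' : HasFDerivAt H (fderiv ℝ H (Φ t z)) (Φ t z) := ((diffH hH2) (Φ t z)).hasFDerivAt
  have hcomp := hH'.comp_hasDerivAt t hpair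
  have hval : fderiv ℝ H (Φ t z) ((Hp H xt pt, -Hx H xt pt - lam • pt)) =
      -(lam * ⟪Hp H xt pt, pt⟫) := by
    have hsplit := fderiv_H_split hH2 xt pt (Hp H xt pt) (-Hx H xt pt - lam • pt)
    have hxp : ((xt, pt) : E n × E n) = Φ t z := rfl
    rw [hxp] at hsplit
    rw [hsplit]
    rw [inner_sub_right, inner_neg_right, inner_smul_right]
    have hcomm : ⟪Hx H xt pt, Hp H xt pt⟫ = ⟪Hp H xt pt, Hx H xt pt⟫ := real_inner_comm _ _
    rw [hcomm]
    ring
  rw [hval] at hcomp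
  exact hcomp

/-- Derivative of `t ↦ exp (lam*t) * H (Φ t z)`. -/
lemma expH_hasDerivAt (hH2 : ContDiff ℝ 2 H) (hΦ : IsDiscountedFlow lam H Φ)
    (z : E n × E n) (t : ℝ) :
    HasDerivAt (fun s => Real.exp (lam * s) * H (Φ s z))
      (Real.exp (lam * t) * (lam * H (Φ t z)
        - lam * ⟪Hp H (Φ t z).1 (Φ t z).2, (Φ t z).2⟫)) t := by
  have h1 : HasDerivAt (fun s : ℝ => Real.exp (lam * s)) (lam * Real.exp (lam * t)) t := by
    have := (Real.hasDerivAt_exp (lam * t)).comp t ((hasDerivAt_id t).const_mul lam)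
    exact this.congr_deriv (by ring)
  have h2 := orbit_hasDerivAt hH2 hΦ z t
  have := h1.mul h2
  exact this.congr_deriv (by ring)
end OrbitDeriv
section LimitLemma

variable {n : ℕ} {H : E n × E n → ℝ} {u : E n → ℝ} {lam : ℝ}

lemma equilibrium_limit (hH : Tonelli H) (hulip : LocallyLipschitz u)
    {y q : ℕ → E n} {Y Q : E n}
    (hy : Filter.Tendsto y Filter.atTop (nhds Y))
    (hq : Filter.Tendsto q Filter.atTop (nhds Q))
    (h1 : ∀ k, lam * u (y k) + H (y k, q k) = 0)
    (h2 : ∀ k, lam • q k + Hx H (y k) (q k) = 0) :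
    lam * u Y + H (Y, Q) = 0 ∧ lam • Q + Hx H Y Q = 0 := by
  have hpair : Filter.Tendsto (fun k => ((y k : E n), q k)) Filter.atTop (nhds (Y, Q)) :=
    hy.prodMk_nhds hq
  constructor
  · have hcont : Continuous (fun w : E n × E n => lam * u w.1 + H w) :=
      (continuous_const.mul (hulip.continuous.comp continuous_fst)).add hH.1.continuous
    have hlim := (hcont.continuousAt (x := (Y, Q))).tendsto.comp hpair
    have hconst : ((fun w : E n × E n => lam * u w.1 + H w) ∘ fun k => (y k, q k)) =
        fun _ => (0:ℝ) := funext fun k => h1 k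
    rw [hconst] at hlim
    exact (tendsto_nhds_unique tendsto_const_nhds hlim).symm
  · have hcont : Continuous (fun w : E n × E n => lam • w.2 + Hx H w.1 w.2) :=
      (continuous_snd.const_smul lam).add (continuous_Hx hH.1)
    have hlim := (hcont.continuousAt (x := (Y, Q))).tendsto.comp hpair
    have hconst : ((fun w : E n × E n => lam • w.2 + Hx H w.1 w.2) ∘ fun k => (y k, q k)) =
        fun _ => (0:E n) := funext fun k => h2 k
    rw [hconst] at hlim
    exact (tendsto_nhds_unique tendsto_const_nhds hlim).symm

end LimitLemma
section SlopeBound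

open Metric

variable {n : ℕ} {H : E n × E n → ℝ} {u : E n → ℝ} {lam : ℝ}
  {Φ : ℝ → E n × E n → E n × E n}

local notation "⟪" x ", " y "⟫" => @inner ℝ _ _ x y

set_option maxHeartbeats 1000000 in
lemma slope_freq_lt (hH : Tonelli H) (hlam : 0 < lam)
    (hΦ : IsDiscountedFlow lam H Φ) (hulip : LocallyLipschitz u)
    (hHJ : ∀ x : E n, DifferentiableAt ℝ u x → lam * u x + H (x, gradient u x) = 0)
    (hFnonneg : ∀ z : E n × E n, 0 ≤ lam * u z.1 + H z)
    (z : E n × E n) (t : ℝ) {r : ℝ} (hr : 0 < r) :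
    ∃ᶠ s' in nhdsWithin t (Set.Ioi t),
      slope (fun τ => Real.exp (lam * τ) * (lam * u (Φ τ z).1 + H (Φ τ z))) t s' < r := by
  set G : ℝ → ℝ := fun τ => Real.exp (lam * τ) * (lam * u (Φ τ z).1 + H (Φ τ z)) with hG
  by_contra hcon
  rw [Filter.not_frequently] at hcon
  have hev : ∀ᶠ s' in nhdsWithin t (Set.Ioi t), r ≤ slope G t s' :=
    hcon.mono (fun s' h => not_lt.1 h)
  -- choose a sequence tending to t from the right
  obtain ⟨s, hs⟩ := Filter.exists_seq_tendsto (nhdsWithin t (Set.Ioi t))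
  have hstt : Filter.Tendsto s Filter.atTop (nhds t) := hs.mono_right nhdsWithin_le_nhds
  have hsgt : ∀ᶠ k in Filter.atTop, s k ∈ Set.Ioi t := hs.eventually eventually_mem_nhdsWithin
  have hslope_ge : ∀ᶠ k in Filter.atTop, r ≤ slope G t (s k) := hs.eventually hev
  -- notation
  set xt : ℝ → E n := fun τ => (Φ τ z).1 with hxt
  set X : E n := (Φ t z).1 with hX
  set P : E n := (Φ t z).2 with hP
  set V : E n := Hp H X P with hV
  have hx' : ∀ τ, HasDerivAt xt (Hp H (Φ τ z).1 (Φ τ z).2) τ := fun τ => (hΦ.2.2 z τ).1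
  have hxcont : Continuous xt := by
    rw [continuous_iff_continuousAt]; exact fun τ => (hx' τ).continuousAt
  -- q sequence at forward points
  have hqex : ∀ k : ℕ, ∃ q : E n,
      lam * u (xt (s k)) + H (xt (s k), q) = 0 ∧ lam • q + Hx H (xt (s k)) q = 0 :=
    fun k => exists_equilibrium hH hlam hulip hHJ hFnonneg (xt (s k))
  choose q hq1 hq2 using hqex
  -- bound on the q sequence
  obtain ⟨B, hB0, hBbd⟩ := hH.2.2 1
  have hucont : Filter.Tendsto (fun k => -(lam * u (xt (s k)))) Filter.atTop
      (nhds (-(lam * u X))) := by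
    have : Filter.Tendsto (fun k => xt (s k)) Filter.atTop (nhds X) :=
      ((hxcont.tendsto t).comp hstt)
    exact (((continuous_const.mul hulip.continuous).neg).tendsto X).comp this
  obtain ⟨C, hC⟩ := hucont.bddAbove_range
  have hqbd : ∀ k, ‖q k‖ ≤ C + B := by
    intro k
    have h1 : 1 * ‖q k‖ - B ≤ H (xt (s k), q k) := hBbd _ _
    have h2 : H (xt (s k), q k) = -(lam * u (xt (s k))) := by
      have := hq1 k; linarith
    have h3 : -(lam * u (xt (s k))) ≤ C := hC ⟨k, rfl⟩
    linarith
  obtain ⟨qbar, -, φ, hφ, hqφ⟩ :=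
    (isCompact_closedBall (0 : E n) (C + B)).tendsto_subseq
      (fun k => mem_closedBall_zero_iff.2 (hqbd k))
  set σ : ℕ → ℝ := fun k => s (φ k) with hσ
  have hσt : Filter.Tendsto σ Filter.atTop (nhds t) := hstt.comp hφ.tendsto_atTop
  have hσgt : ∀ᶠ k in Filter.atTop, σ k ∈ Set.Ioi t := hφ.tendsto_atTop.eventually hsgt
  have hσslope : ∀ᶠ k in Filter.atTop, r ≤ slope G t (σ k) := hφ.tendsto_atTop.eventually hslope_ge
  have hσne : Filter.Tendsto σ Filter.atTop (nhdsWithin t ({t}ᶜ)) := by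
    apply tendsto_nhdsWithin_of_tendsto_nhds_of_eventually_within _ hσt
    exact hσgt.mono (fun k hk => ne_of_gt hk)
  have hxσ : Filter.Tendsto (fun k => xt (σ k)) Filter.atTop (nhds X) :=
    (hxcont.tendsto t).comp hσt
  -- limit equalities
  obtain ⟨hXq, hXid⟩ := equilibrium_limit hH hulip hxσ hqφ
    (fun k => hq1 (φ k)) (fun k => hq2 (φ k))
  -- slope of x tends to its derivative
  have hslopex : Filter.Tendsto (fun k => slope xt t (σ k)) Filter.atTop (nhds V) := by
    have h := (hasDerivAt_iff_tendsto_slope.1 (hx' t))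
    exact h.comp hσne
  -- Big-O of Δ
  set Δ : ℕ → E n := fun k => xt (σ k) - X with hΔ
  have hΔeq : ∀ᶠ k in Filter.atTop, Δ k = (σ k - t) • slope xt t (σ k) := by
    filter_upwards [hσgt] with k hk
    have hne : σ k - t ≠ 0 := sub_ne_zero.2 (ne_of_gt hk)
    have hsl : slope xt t (σ k) = (σ k - t)⁻¹ • (xt (σ k) - xt t) := rfl
    rw [hsl, smul_inv_smul₀ hne]
  have hΔO : (fun k => ((Δ k, (0:E n)) : E n × E n)) =O[Filter.atTop] (fun k => σ k - t) := by
    rw [Asymptotics.isBigO_iff]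
    refine ⟨‖V‖ + 1, ?_⟩
    have hsb : ∀ᶠ k in Filter.atTop, ‖slope xt t (σ k)‖ < ‖V‖ + 1 :=
      (hslopex.norm).eventually_lt_const (by linarith [norm_nonneg V])
    filter_upwards [hΔeq, hsb] with k hk hsbk
    have : ‖((Δ k, (0:E n)) : E n × E n)‖ = ‖Δ k‖ := by
      simp [Prod.norm_def]
    rw [this, hk, norm_smul]
    rw [Real.norm_eq_abs (σ k - t)]
    have := abs_nonneg (σ k - t)
    calc |σ k - t| * ‖slope xt t (σ k)‖ ≤ |σ k - t| * (‖V‖ + 1) :=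
          mul_le_mul_of_nonneg_left (le_of_lt hsbk) this
      _ = (‖V‖ + 1) * ‖σ k - t‖ := by rw [Real.norm_eq_abs]; ring
  -- strict differentiability little-o
  have hstrict : HasStrictFDerivAt H (fderiv ℝ H (X, qbar)) (X, qbar) :=
    (hH.1.contDiffAt).hasStrictFDerivAt (by norm_num)
  have hW : Filter.Tendsto (fun k => (((xt (σ k), q (φ k)) : E n × E n),
      ((X, q (φ k)) : E n × E n))) Filter.atTop (nhds ((X, qbar), (X, qbar))) :=
    (hxσ.prodMk_nhds hqφ).prodMk_nhds ((tendsto_const_nhds).prodMk_nhds hqφ)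
  have hE := hstrict.isLittleO.comp_tendsto hW
  have hEσ : (fun k => H (xt (σ k), q (φ k)) - H (X, q (φ k)) -
      fderiv ℝ H (X, qbar) ((Δ k, (0:E n)))) =o[Filter.atTop] (fun k => σ k - t) := by
    have heq : (fun k => H (xt (σ k), q (φ k)) - H (X, q (φ k)) -
        fderiv ℝ H (X, qbar) ((Δ k, (0:E n)))) = (fun p : (E n × E n) × (E n × E n) =>
          H p.1 - H p.2 - fderiv ℝ H (X, qbar) (p.1 - p.2)) ∘
          (fun k => ((xt (σ k), q (φ k)), (X, q (φ k)))) := by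
      funext k
      simp only [Function.comp_apply]
      congr 2
      simp [hΔ, Prod.ext_iff]
    have h2 : ((fun p : (E n × E n) × (E n × E n) =>
        H p.1 - H p.2 - fderiv ℝ H (X, qbar) (p.1 - p.2)) ∘
        (fun k => ((xt (σ k), q (φ k)), (X, q (φ k))))) =o[Filter.atTop]
        (fun k => ((xt (σ k), q (φ k)) : E n × E n) - (X, q (φ k))) := hE
    rw [← heq] at h2
    have h3 : (fun k => ((xt (σ k), q (φ k)) : E n × E n) - (X, q (φ k))) =
        fun k => ((Δ k, (0:E n)) : E n × E n) := by
      funext k; simp [hΔ, Prod.ext_iff]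
    rw [h3] at h2
    exact h2.trans_isBigO hΔO
  have hEdiv : Filter.Tendsto (fun k => (H (xt (σ k), q (φ k)) - H (X, q (φ k)) -
      fderiv ℝ H (X, qbar) ((Δ k, (0:E n)))) / (σ k - t)) Filter.atTop (nhds 0) :=
    hEσ.tendsto_div_nhds_zero
  have hlin : Filter.Tendsto (fun k => fderiv ℝ H (X, qbar) ((Δ k, (0:E n))) / (σ k - t))
      Filter.atTop (nhds ⟪Hx H X qbar, V⟫) := by
    have heq : (fun k => fderiv ℝ H (X, qbar) ((Δ k, (0:E n))) / (σ k - t)) =ᶠ[Filter.atTop]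
        (fun k => ⟪Hx H X qbar, slope xt t (σ k)⟫) := by
      filter_upwards [hσgt] with k hk
      have hne : σ k - t ≠ 0 := sub_ne_zero.2 (ne_of_gt hk)
      rw [← inner_Hx hH.1 X qbar (Δ k)]
      have hsl : slope xt t (σ k) = (σ k - t)⁻¹ • (xt (σ k) - xt t) := rfl
      rw [hsl, real_inner_smul_right]
      show ⟪Hx H X qbar, Δ k⟫ / (σ k - t) = (σ k - t)⁻¹ * ⟪Hx H X qbar, xt (σ k) - xt t⟫
      rw [show xt (σ k) - xt t = Δ k from rfl]
      field_simp
    have h2 : Filter.Tendsto (fun k => ⟪Hx H X qbar, slope xt t (σ k)⟫)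
        Filter.atTop (nhds ⟪Hx H X qbar, V⟫) := by
      exact (Filter.Tendsto.inner tendsto_const_nhds hslopex)
    exact h2.congr' heq.symm
  -- main term limit
  have hDq : Filter.Tendsto (fun k =>
      (H (X, q (φ k)) - H (xt (σ k), q (φ k))) / (σ k - t))
      Filter.atTop (nhds (-⟪Hx H X qbar, V⟫)) := by
    have heq : (fun k => (H (X, q (φ k)) - H (xt (σ k), q (φ k))) / (σ k - t)) =
        fun k => -((H (xt (σ k), q (φ k)) - H (X, q (φ k)) -
          fderiv ℝ H (X, qbar) ((Δ k, (0:E n)))) / (σ k - t) +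
          fderiv ℝ H (X, qbar) ((Δ k, (0:E n))) / (σ k - t)) := by
      funext k
      rw [← add_div]
      ring_nf
    rw [heq]
    have := (hEdiv.add hlin).neg
    simpa using this
  -- slope of the exponential
  have hexp : Filter.Tendsto (fun k => slope (fun τ => Real.exp (lam * τ)) t (σ k))
      Filter.atTop (nhds (lam * Real.exp (lam * t))) := by
    have hd : HasDerivAt (fun τ : ℝ => Real.exp (lam * τ)) (lam * Real.exp (lam * t)) t := by
      have := (Real.hasDerivAt_exp (lam * t)).comp t ((hasDerivAt_id t).const_mul lam)
      exact this.congr_deriv (by ring)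
    exact (hasDerivAt_iff_tendsto_slope.1 hd).comp hσne
  -- slope of exp * H ∘ Φ
  have hMH : Filter.Tendsto (fun k => slope (fun τ => Real.exp (lam * τ) * H (Φ τ z)) t (σ k))
      Filter.atTop (nhds (Real.exp (lam * t) * (lam * H (Φ t z) - lam * ⟪Hp H X P, P⟫))) := by
    exact (hasDerivAt_iff_tendsto_slope.1 (expH_hasDerivAt hH.1 hΦ z t)).comp hσne
  -- exp factor
  have hexpσ : Filter.Tendsto (fun k => Real.exp (lam * σ k)) Filter.atTop
      (nhds (Real.exp (lam * t))) := by
    have hc : Continuous (fun τ : ℝ => Real.exp (lam * τ)) :=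
      Real.continuous_exp.comp (continuous_const.mul continuous_id)
    exact (hc.tendsto t).comp hσt
  -- the upper bound sequence
  set BB : ℕ → ℝ := fun k =>
    lam * u X * slope (fun τ => Real.exp (lam * τ)) t (σ k) +
    Real.exp (lam * σ k) * ((H (X, q (φ k)) - H (xt (σ k), q (φ k))) / (σ k - t)) +
    slope (fun τ => Real.exp (lam * τ) * H (Φ τ z)) t (σ k) with hBB
  have hBBlim : Filter.Tendsto BB Filter.atTop (nhds
      (lam * u X * (lam * Real.exp (lam * t)) +
       Real.exp (lam * t) * (-⟪Hx H X qbar, V⟫) +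
       Real.exp (lam * t) * (lam * H (Φ t z) - lam * ⟪Hp H X P, P⟫))) := by
    exact ((tendsto_const_nhds.mul hexp).add (hexpσ.mul hDq)).add hMH
  -- slope G ≤ BB eventually
  have hslope_le : ∀ᶠ k in Filter.atTop, slope G t (σ k) ≤ BB k := by
    filter_upwards [hσgt] with k hk
    have hpos : (0:ℝ) < σ k - t := sub_pos.2 hk
    have hexppos : (0:ℝ) < Real.exp (lam * σ k) := Real.exp_pos _
    have hu1 : lam * u (xt (σ k)) + H (xt (σ k), q (φ k)) = 0 := hq1 (φ k)
    have hu2 : (0:ℝ) ≤ lam * u X + H (X, q (φ k)) := hFnonneg (X, q (φ k))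
    have hkey : G (σ k) - G t ≤
        (lam * u X) * (Real.exp (lam * σ k) - Real.exp (lam * t)) +
        Real.exp (lam * σ k) * (H (X, q (φ k)) - H (xt (σ k), q (φ k))) +
        (Real.exp (lam * σ k) * H (Φ (σ k) z) - Real.exp (lam * t) * H (Φ t z)) := by
      have hGs : G (σ k) = Real.exp (lam * σ k) * (lam * u (xt (σ k)) + H (Φ (σ k) z)) := rfl
      have hGt : G t = Real.exp (lam * t) * (lam * u X + H (Φ t z)) := rfl
      rw [hGs, hGt]
      have h5 : lam * u (xt (σ k)) ≤ lam * u X +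
          (H (X, q (φ k)) - H (xt (σ k), q (φ k))) := by linarith
      nlinarith [mul_le_mul_of_nonneg_left h5 (le_of_lt hexppos)]
    have hBBk : BB k = ((lam * u X) * (Real.exp (lam * σ k) - Real.exp (lam * t)) +
        Real.exp (lam * σ k) * (H (X, q (φ k)) - H (xt (σ k), q (φ k))) +
        (Real.exp (lam * σ k) * H (Φ (σ k) z) - Real.exp (lam * t) * H (Φ t z))) / (σ k - t) := by
      rw [hBB]
      simp only [slope_def_field]
      field_simp
      try ring
    rw [slope_def_field, hBBk]
    exact (div_le_div_iff_of_pos_right hpos).2 hkey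
  -- pass to the limit
  have hrBB : ∀ᶠ k in Filter.atTop, r ≤ BB k := by
    filter_upwards [hσslope, hslope_le] with k h1 h2
    exact le_trans h1 h2
  have hrS : r ≤ lam * u X * (lam * Real.exp (lam * t)) +
      Real.exp (lam * t) * (-⟪Hx H X qbar, V⟫) +
      Real.exp (lam * t) * (lam * H (Φ t z) - lam * ⟪Hp H X P, P⟫) :=
    ge_of_tendsto hBBlim hrBB
  -- show the limit is ≤ 0
  have hHxq : Hx H X qbar = -(lam • qbar) := eq_neg_of_add_eq_zero_right hXid
  have hinner : -⟪Hx H X qbar, V⟫ = lam * ⟪V, qbar⟫ := by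
    rw [hHxq, inner_neg_left, neg_neg, real_inner_smul_left, real_inner_comm]
  have hconv : ⟪Hp H X P, qbar - P⟫ ≤ H (X, qbar) - H (X, P) := convex_ineq hH X P qbar
  have hHXP : H (X, P) = H (Φ t z) := rfl
  have h6 : lam * u X + ⟪V, qbar⟫ - ⟪V, P⟫ + H (X, P) ≤ 0 := by
    rw [inner_sub_right] at hconv
    have hVdef : (⟪Hp H X P, qbar⟫ : ℝ) = ⟪V, qbar⟫ := rfl
    have hVdef2 : (⟪Hp H X P, P⟫ : ℝ) = ⟪V, P⟫ := rfl
    rw [hVdef, hVdef2] at hconv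
    linarith [hXq]
  have hS : lam * u X * (lam * Real.exp (lam * t)) +
      Real.exp (lam * t) * (-⟪Hx H X qbar, V⟫) +
      Real.exp (lam * t) * (lam * H (Φ t z) - lam * ⟪Hp H X P, P⟫) =
      (lam * Real.exp (lam * t)) * (lam * u X + ⟪V, qbar⟫ - ⟪V, P⟫ + H (X, P)) := by
    rw [hinner, hHXP]
    have hVP : (⟪Hp H X P, P⟫ : ℝ) = ⟪V, P⟫ := rfl
    rw [hVP]
    ring
  rw [hS] at hrS
  have hfac : (0:ℝ) < lam * Real.exp (lam * t) := mul_pos hlam (Real.exp_pos _)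
  nlinarith

end SlopeBound
section Final

variable {n : ℕ} {H : E n × E n → ℝ} {u : E n → ℝ} {lam : ℝ}
  {Φ : ℝ → E n × E n → E n × E n}

lemma G_antitone (hH : Tonelli H) (hlam : 0 < lam)
    (hΦ : IsDiscountedFlow lam H Φ) (hulip : LocallyLipschitz u)
    (hHJ : ∀ x : E n, DifferentiableAt ℝ u x → lam * u x + H (x, gradient u x) = 0)
    (hFnonneg : ∀ z : E n × E n, 0 ≤ lam * u z.1 + H z)
    (z : E n × E n) {a b : ℝ} (hab : a ≤ b) :
    Real.exp (lam * b) * (lam * u (Φ b z).1 + H (Φ b z)) ≤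
      Real.exp (lam * a) * (lam * u (Φ a z).1 + H (Φ a z)) := by
  set G : ℝ → ℝ := fun τ => Real.exp (lam * τ) * (lam * u (Φ τ z).1 + H (Φ τ z)) with hG
  rcases eq_or_lt_of_le hab with rfl | hab
  · exact le_refl _
  have hΦc : Continuous (fun τ => Φ τ z) := by
    rw [continuous_iff_continuousAt]
    intro τ
    have h1 := ((hΦ.2.2 z τ).1).continuousAt
    have h2 := ((hΦ.2.2 z τ).2).continuousAt
    have := h1.prodMk h2
    simpa using this
  have hGcont : Continuous G := by
    apply Continuous.mul
    · exact Real.continuous_exp.comp (continuous_const.mul continuous_id)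
    · exact (continuous_const.mul (hulip.continuous.comp (continuous_fst.comp hΦc))).add
        (hH.1.continuous.comp hΦc)
  have := image_le_of_liminf_slope_right_le_deriv_boundary (f := G) (a := a) (b := b)
    (B := fun _ => G a) (B' := fun _ => 0) hGcont.continuousOn le_rfl continuousOn_const
    (fun x _ => (hasDerivAt_const x (G a)).hasDerivWithinAt)
    (fun x _ r hr => slope_freq_lt hH hlam hΦ hulip hHJ hFnonneg z x hr)
  exact this (Set.right_mem_Icc.2 (le_of_lt hab))

end Final

/-- If `F(x,p) = λu(x) + H(x,p)` is everywhere nonnegative, then `F` tends to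
`0` along every orbit, and every ω-limit point lies in `{F = 0}`. -/
theorem stmt_14 {n : ℕ} (hn : 1 ≤ n) (lam : ℝ) (hlam : 0 < lam)
    (H : E n × E n → ℝ) (hH : Tonelli H)
    (Φ : ℝ → E n × E n → E n × E n) (hΦ : IsDiscountedFlow lam H Φ)
    (u : E n → ℝ) (hulip : LocallyLipschitz u)
    (hHJ : ∀ x : E n, DifferentiableAt ℝ u x → lam * u x + H (x, gradient u x) = 0)
    (hFnonneg : ∀ z : E n × E n, 0 ≤ lam * u z.1 + H z) :
    (∀ z : E n × E n,
      Tendsto (fun t => lam * u (Φ t z).1 + H (Φ t z)) atTop (nhds 0)) ∧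
    (∀ z w : E n × E n,
      (∃ tk : ℕ → ℝ, Tendsto tk atTop atTop ∧
        Tendsto (fun k => Φ (tk k) z) atTop (nhds w)) →
      lam * u w.1 + H w = 0) := by
  have part1 : ∀ z : E n × E n,
      Tendsto (fun t => lam * u (Φ t z).1 + H (Φ t z)) atTop (nhds 0) := by
    intro z
    set F : ℝ → ℝ := fun t => lam * u (Φ t z).1 + H (Φ t z) with hF
    set C : ℝ := lam * u z.1 + H z with hC
    have hΦ0 : Φ 0 z = z := by rw [hΦ.1]; rfl
    have hupper : ∀ t : ℝ, 0 ≤ t → F t ≤ Real.exp (-(lam * t)) * C := by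
      intro t ht
      have hmono := G_antitone hH hlam hΦ hulip hHJ hFnonneg z ht
      rw [hΦ0] at hmono
      simp only [mul_zero, Real.exp_zero, one_mul] at hmono
      have hepos : (0:ℝ) < Real.exp (lam * t) := Real.exp_pos _
      rw [hF, hC]
      rw [Real.exp_neg]
      rw [inv_mul_eq_div, le_div_iff₀ hepos]
      calc (lam * u (Φ t z).1 + H (Φ t z)) * Real.exp (lam * t)
          = Real.exp (lam * t) * (lam * u (Φ t z).1 + H (Φ t z)) := by ring
        _ ≤ lam * u z.1 + H z := hmono
    have hlower : ∀ t : ℝ, 0 ≤ F t := fun t => hFnonneg (Φ t z)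
    have htop : Tendsto (fun t : ℝ => Real.exp (-(lam * t)) * C) atTop (nhds 0) := by
      have h1 : Tendsto (fun t : ℝ => lam * t) atTop atTop :=
        Tendsto.const_mul_atTop hlam tendsto_id
      have h2 : Tendsto (fun t : ℝ => -(lam * t)) atTop atBot :=
        tendsto_neg_atBot_iff.2 h1
      have h3 : Tendsto (fun t : ℝ => Real.exp (-(lam * t))) atTop (nhds 0) :=
        Real.tendsto_exp_atBot.comp h2
      have := h3.mul_const C
      simpa using this
    apply tendsto_of_tendsto_of_tendsto_of_le_of_le' tendsto_const_nhds htop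
    · exact Filter.Eventually.of_forall hlower
    · filter_upwards [Filter.eventually_ge_atTop (0:ℝ)] with t ht
      exact hupper t ht
  refine ⟨part1, ?_⟩
  intro z w ⟨tk, htk, hconv⟩
  have h1 : Tendsto (fun k => lam * u (Φ (tk k) z).1 + H (Φ (tk k) z)) atTop (nhds 0) :=
    (part1 z).comp htk
  have hFc : Continuous (fun ζ : E n × E n => lam * u ζ.1 + H ζ) :=
    (continuous_const.mul (hulip.continuous.comp continuous_fst)).add hH.1.continuous
  have h2 : Tendsto (fun k => lam * u (Φ (tk k) z).1 + H (Φ (tk k) z)) atTop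
      (nhds (lam * u w.1 + H w)) := (hFc.continuousAt.tendsto).comp hconv
  exact tendsto_nhds_unique h2 h1

end
end
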